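/- arXiv:1304.0580 — 2 statements merged into one kernel-verified Lean document; each statement's English description precedes it below -/
import Mathlib

section
/- Let G be a sub-σ-field of σ(X) with Y ⊥⊥ X | G, and suppose the class of G-measurable functions is complete, i.e., every G-measurable f ∈ L²(μ) with μ[f|σ(Y)] = 0 μ-a.e. satisfies f = 0 μ-a.e. Then for every σ(X)-measurable f : Ω → ℝ in L²(μ) with ∫ f dμ = 0, the following are equivalent: (i) f is μ-a.e. equal to a G-measurable function; (ii) ∫ f·h dμ = 0 for every σ(X)-measurable h : Ω → ℝ in L²(μ) with ∫ h dμ = 0 and μ[h|σ(Y)] = 0 μ-a.e. -/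
open MeasureTheory ProbabilityTheory

/-- `Y ⊥⊥ X | G` : conditional independence of `Y` and `X` given a sub-σ-field `G`,
as defined in the paper: for all `A ∈ σ(X)` and `B ∈ σ(Y)`,
`μ[1_{A∩B}|G] = μ[1_A|G] ⬝ μ[1_B|G]` a.e.  The ambient σ-field `mΩ` is explicit. -/
def CondIndepSigma {Ω : Type*} (mΩ : MeasurableSpace Ω) (μ : Measure Ω)
    (mX mY G : MeasurableSpace Ω) : Prop :=
  ∀ A : Set Ω, MeasurableSet[mX] A → ∀ B : Set Ω, MeasurableSet[mY] B →
    condExp G (m₀ := mΩ) μ ((A ∩ B).indicator (fun _ => (1 : ℝ))) =ᵐ[μ]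
      fun ω => (condExp G (m₀ := mΩ) μ (A.indicator (fun _ => (1 : ℝ)))) ω *
        (condExp G (m₀ := mΩ) μ (B.indicator (fun _ => (1 : ℝ)))) ω

/-! Conditional independence gives `μ[1_B|G] = μ[1_B|σ(X)]` for `B ∈ σ(Y)`; since conditional
expectation is self-adjoint on `L²`, it follows that `μ[h|G]` and `h` have the same conditional
expectation given `σ(Y)` for every square-integrable `σ(X)`-measurable `h`. If `f` is
`G`-measurable and `μ[h|σ(Y)] = 0`, completeness forces `μ[h|G] = 0`, so
`∫ f h = ∫ f μ[h|G] = 0`. Conversely `h = f - μ[f|G]` is an admissible test function, and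
`∫ f h = 0` together with `h ⊥ μ[f|G]` gives `∫ h² = 0`. -/

theorem setIntegral_eq_integral_mul_indicator_one {Ω : Type*} [MeasurableSpace Ω]
    {μ : Measure Ω} {s : Set Ω} (hs : MeasurableSet s) (f : Ω → ℝ) :
    ∫ ω in s, f ω ∂μ = ∫ ω, f ω * s.indicator (fun _ => (1 : ℝ)) ω ∂μ := by
  rw [← integral_indicator hs]
  congr 1 with ω
  by_cases hω : ω ∈ s <;> simp [hω]

theorem integrable_mul_of_memLp_two {Ω : Type*} [MeasurableSpace Ω] {μ : Measure Ω}
    {f g : Ω → ℝ} (hf : MemLp f 2 μ) (hg : MemLp g 2 μ) :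
    Integrable (fun ω => f ω * g ω) μ :=
  hf.integrable_mul hg

section CondExpL2

variable {Ω : Type*} {m mΩ : MeasurableSpace Ω} {μ : Measure Ω}
  [IsFiniteMeasure μ] {f g : Ω → ℝ}

theorem integral_mul_condExp_of_stronglyMeasurable (hm : m ≤ mΩ) (hg : StronglyMeasurable[m] g)
    (hg2 : MemLp g 2 μ) (hf2 : MemLp f 2 μ) :
    ∫ ω, g ω * μ[f|m] ω ∂μ = ∫ ω, g ω * f ω ∂μ :=
  calc ∫ ω, g ω * μ[f|m] ω ∂μ = ∫ ω, μ[g * f|m] ω ∂μ :=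
        integral_congr_ae (condExp_mul_of_stronglyMeasurable_left hg (hg2.integrable_mul hf2)
          (hf2.integrable one_le_two)).symm
    _ = ∫ ω, g ω * f ω ∂μ := integral_condExp hm

theorem integral_condExp_mul_eq_integral_mul_condExp (hm : m ≤ mΩ) (hf2 : MemLp f 2 μ)
    (hg2 : MemLp g 2 μ) : ∫ ω, μ[f|m] ω * g ω ∂μ = ∫ ω, f ω * μ[g|m] ω ∂μ := by
  have key : ∀ {f g : Ω → ℝ}, MemLp f 2 μ → MemLp g 2 μ →
      ∫ ω, μ[f|m] ω * μ[g|m] ω ∂μ = ∫ ω, μ[f|m] ω * g ω ∂μ := fun hf2 hg2 =>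
    integral_mul_condExp_of_stronglyMeasurable hm stronglyMeasurable_condExp
      (hf2.condExp one_le_two) hg2
  rw [← key hf2 hg2]
  simp_rw [mul_comm (μ[f|m] _), mul_comm (f _), key hg2 hf2]

theorem integral_condExp_mul_sub_condExp_eq_zero (hm : m ≤ mΩ) (hf2 : MemLp f 2 μ) :
    ∫ ω, μ[f|m] ω * (f ω - μ[f|m] ω) ∂μ = 0 := by
  have hc2 : MemLp (μ[f|m]) 2 μ := hf2.condExp one_le_two
  simp_rw [mul_sub]
  rw [integral_sub (integrable_mul_of_memLp_two hc2 hf2) (integrable_mul_of_memLp_two hc2 hc2),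
    integral_mul_condExp_of_stronglyMeasurable hm stronglyMeasurable_condExp hc2 hf2, sub_self]

theorem ae_eq_condExp_of_integral_mul_sub_condExp_eq_zero (hm : m ≤ mΩ) (hf2 : MemLp f 2 μ)
    (horth : ∫ ω, f ω * (f ω - μ[f|m] ω) ∂μ = 0) : f =ᵐ[μ] μ[f|m] := by
  have hc2 : MemLp (μ[f|m]) 2 μ := hf2.condExp one_le_two
  have he2 : MemLp (fun ω => f ω - μ[f|m] ω) 2 μ := hf2.sub hc2
  have hsq : ∫ ω, (f ω - μ[f|m] ω) * (f ω - μ[f|m] ω) ∂μ = 0 := by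
    simp_rw [sub_mul (f _)]
    rw [integral_sub (integrable_mul_of_memLp_two hf2 he2) (integrable_mul_of_memLp_two hc2 he2),
      horth,
      integral_condExp_mul_sub_condExp_eq_zero hm hf2, sub_self]
  have hsq0 := (integral_eq_zero_iff_of_nonneg (fun ω => mul_self_nonneg (f ω - μ[f|m] ω))
    (he2.integrable_mul he2)).mp hsq
  filter_upwards [hsq0] with ω hω
  exact sub_eq_zero.mp (mul_self_eq_zero.mp hω)

end CondExpL2

section CondIndepSigma

variable {Ω : Type*} {mX mY G mΩ : MeasurableSpace Ω} {μ : Measure Ω} [IsFiniteMeasure μ]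

theorem condExp_indicator_ae_eq_of_condIndepSigma (hG : G ≤ mX) (hmX : mX ≤ mΩ)
    (hmY : mY ≤ mΩ) (hCI : CondIndepSigma mΩ μ mX mY G) {B : Set Ω}
    (hB : MeasurableSet[mY] B) :
    μ[B.indicator (fun _ => (1 : ℝ))|G] =ᵐ[μ] μ[B.indicator (fun _ => (1 : ℝ))|mX] := by
  have hB2 : MemLp (B.indicator fun _ => (1 : ℝ)) 2 μ := (memLp_const 1).indicator (hmY B hB)
  refine ae_eq_condExp_of_forall_setIntegral_eq hmX (hB2.integrable one_le_two)
    (fun s _ _ => integrable_condExp.integrableOn) (fun s hs _ => ?_)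
    (stronglyMeasurable_condExp.mono hG).aestronglyMeasurable
  have hs2 : MemLp (s.indicator fun _ => (1 : ℝ)) 2 μ := (memLp_const 1).indicator (hmX s hs)
  calc ∫ ω in s, μ[B.indicator (fun _ => (1 : ℝ))|G] ω ∂μ
      = ∫ ω, μ[B.indicator (fun _ => (1 : ℝ))|G] ω * s.indicator (fun _ => (1 : ℝ)) ω ∂μ :=
        setIntegral_eq_integral_mul_indicator_one (hmX s hs) _
    _ = ∫ ω, μ[B.indicator (fun _ => (1 : ℝ))|G] ω * μ[s.indicator (fun _ => (1 : ℝ))|G] ω ∂μ :=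
        (integral_mul_condExp_of_stronglyMeasurable (hG.trans hmX) stronglyMeasurable_condExp
          (hB2.condExp one_le_two) hs2).symm
    _ = ∫ ω, μ[(s ∩ B).indicator (fun _ => (1 : ℝ))|G] ω ∂μ :=
        integral_congr_ae ((hCI s hs B hB).mono fun ω hω => (hω.trans (mul_comm _ _)).symm)
    _ = ∫ ω in s, B.indicator (fun _ => (1 : ℝ)) ω ∂μ := by
        rw [integral_condExp (hG.trans hmX), ← Set.indicator_indicator,
          integral_indicator (hmX s hs)]

theorem condExp_condExp_ae_eq_of_condIndepSigma (hG : G ≤ mX) (hmX : mX ≤ mΩ)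
    (hmY : mY ≤ mΩ) (hCI : CondIndepSigma mΩ μ mX mY G) {h : Ω → ℝ}
    (hh : StronglyMeasurable[mX] h) (hh2 : MemLp h 2 μ) :
    μ[μ[h|G]|mY] =ᵐ[μ] μ[h|mY] := by
  refine ae_eq_condExp_of_forall_setIntegral_eq hmY (hh2.integrable one_le_two)
    (fun s _ _ => integrable_condExp.integrableOn) (fun B hB _ => ?_)
    stronglyMeasurable_condExp.aestronglyMeasurable
  have hB2 : MemLp (B.indicator fun _ => (1 : ℝ)) 2 μ := (memLp_const 1).indicator (hmY B hB)
  calc ∫ ω in B, μ[μ[h|G]|mY] ω ∂μ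
      = ∫ ω, μ[h|G] ω * B.indicator (fun _ => (1 : ℝ)) ω ∂μ := by
        rw [setIntegral_condExp hmY integrable_condExp hB,
          setIntegral_eq_integral_mul_indicator_one (hmY B hB)]
    _ = ∫ ω, h ω * μ[B.indicator (fun _ => (1 : ℝ))|G] ω ∂μ :=
        integral_condExp_mul_eq_integral_mul_condExp (hG.trans hmX) hh2 hB2
    _ = ∫ ω, h ω * μ[B.indicator (fun _ => (1 : ℝ))|mX] ω ∂μ :=
        integral_congr_ae ((condExp_indicator_ae_eq_of_condIndepSigma hG hmX hmY hCI hB).mono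
          fun ω hω => by simp only [hω])
    _ = ∫ ω in B, h ω ∂μ := by
        rw [integral_mul_condExp_of_stronglyMeasurable hmX hh hh2 hB2,
          setIntegral_eq_integral_mul_indicator_one (hmY B hB)]

end CondIndepSigma

theorem complete_class_eq_regression_class_general
    {Ω EX EY : Type*} [mΩ : MeasurableSpace Ω] [mEX : MeasurableSpace EX]
    [mEY : MeasurableSpace EY]
    (μ : Measure Ω) [IsProbabilityMeasure μ]
    (X : Ω → EX) (Y : Ω → EY) (hX : Measurable X) (hY : Measurable Y)
    (G : MeasurableSpace Ω) (hG : G ≤ MeasurableSpace.comap X mEX)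
    (hCI : CondIndepSigma mΩ μ (MeasurableSpace.comap X mEX) (MeasurableSpace.comap Y mEY) G)
    (hcomplete : ∀ f : Ω → ℝ, Measurable[G] f → MemLp f 2 μ →
      (μ[f|MeasurableSpace.comap Y mEY] =ᵐ[μ] 0) → f =ᵐ[μ] 0)
    (f : Ω → ℝ) (hf : Measurable[MeasurableSpace.comap X mEX] f)
    (hf2 : MemLp f 2 μ) :
    (∃ g : Ω → ℝ, Measurable[G] g ∧ f =ᵐ[μ] g) ↔
      (∀ h : Ω → ℝ, Measurable[MeasurableSpace.comap X mEX] h → MemLp h 2 μ →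
        (∫ ω, h ω ∂μ = 0) → (μ[h|MeasurableSpace.comap Y mEY] =ᵐ[μ] 0) →
        ∫ ω, f ω * h ω ∂μ = 0) := by
  have hGΩ : G ≤ mΩ := hG.trans hX.comap_le
  have htower : ∀ h : Ω → ℝ, Measurable[MeasurableSpace.comap X mEX] h → MemLp h 2 μ →
      μ[μ[h|G]|MeasurableSpace.comap Y mEY] =ᵐ[μ] μ[h|MeasurableSpace.comap Y mEY] :=
    fun h hh hh2 => condExp_condExp_ae_eq_of_condIndepSigma hG hX.comap_le hY.comap_le hCI
      hh.stronglyMeasurable hh2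
  constructor
  · rintro ⟨g, hg, hfg⟩ h hh hh2 - hhY
    have hhG : μ[h|G] =ᵐ[μ] 0 := hcomplete _ stronglyMeasurable_condExp.measurable
      (hh2.condExp one_le_two) ((htower h hh hh2).trans hhY)
    calc ∫ ω, f ω * h ω ∂μ = ∫ ω, g ω * μ[h|G] ω ∂μ := by
          rw [integral_mul_condExp_of_stronglyMeasurable hGΩ hg.stronglyMeasurable
            (hf2.ae_eq hfg) hh2]
          exact integral_congr_ae (hfg.mono fun ω hω => by simp only [hω])
      _ = 0 := by
          rw [integral_congr_ae (hhG.mono fun ω hω => by rw [hω, Pi.zero_apply, mul_zero]),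
            integral_zero]
  · intro horth
    refine ⟨μ[f|G], stronglyMeasurable_condExp.measurable,
      ae_eq_condExp_of_integral_mul_sub_condExp_eq_zero hGΩ hf2 (horth _ ?_ ?_ ?_ ?_)⟩
    · exact hf.sub (stronglyMeasurable_condExp.measurable.mono hG le_rfl)
    · exact hf2.sub (hf2.condExp one_le_two)
    · rw [integral_sub (hf2.integrable one_le_two) integrable_condExp, integral_condExp hGΩ,
        sub_self]
    · change μ[f - μ[f|G]|MeasurableSpace.comap Y mEY] =ᵐ[μ] 0
      filter_upwards [condExp_sub (hf2.integrable one_le_two) integrable_condExp _,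
        htower f hf hf2] with ω hsub htow
      rw [hsub, Pi.sub_apply, htow, sub_self, Pi.zero_apply]

/-- Under completeness of a sufficient class, a centered square-integrable
`σ(X)`-measurable `f` is a.e. equal to a `G`-measurable function iff it belongs to the
regression class (it is orthogonal to all centered square-integrable `σ(X)`-measurable
`h` with `E[h|σ(Y)] = 0`). -/
theorem complete_class_eq_regression_class
    {Ω EX EY : Type*} [mΩ : MeasurableSpace Ω] [mEX : MeasurableSpace EX]
    [mEY : MeasurableSpace EY]
    (μ : Measure Ω) [IsProbabilityMeasure μ]
    (X : Ω → EX) (Y : Ω → EY) (hX : Measurable X) (hY : Measurable Y)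
    (G : MeasurableSpace Ω) (hG : G ≤ MeasurableSpace.comap X mEX)
    (hCI : CondIndepSigma mΩ μ (MeasurableSpace.comap X mEX) (MeasurableSpace.comap Y mEY) G)
    (hcomplete : ∀ f : Ω → ℝ, Measurable[G] f → MemLp f 2 μ →
      (μ[f|MeasurableSpace.comap Y mEY] =ᵐ[μ] 0) → f =ᵐ[μ] 0)
    (f : Ω → ℝ) (hf : Measurable[MeasurableSpace.comap X mEX] f)
    (hf2 : MemLp f 2 μ) (hf0 : ∫ ω, f ω ∂μ = 0) :
    (∃ g : Ω → ℝ, Measurable[G] g ∧ f =ᵐ[μ] g) ↔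
      (∀ h : Ω → ℝ, Measurable[MeasurableSpace.comap X mEX] h → MemLp h 2 μ →
        (∫ ω, h ω ∂μ = 0) → (μ[h|MeasurableSpace.comap Y mEY] =ᵐ[μ] 0) →
        ∫ ω, f ω * h ω ∂μ = 0) :=
  complete_class_eq_regression_class_general (mΩ := mΩ) (mEX := mEX) (mEY := mEY) μ X Y hX hY G hG
    hCI hcomplete f hf hf2
end

section
/- Suppose there is a Markov kernel κ from E_Y to E_X that is a regular conditional distribution of X given Y, and a σ-finite measure ν on E_X with κ(y) ≪ ν for every y ∈ E_Y, and let G* be the smallest SDR σ-field for Y versus X (the central σ-field, which exists and is unique under this hypothesis). Let G be a sub-σ-field of σ(X) with Y ⊥⊥ X | G whose class of G-measurable functions is complete (every G-measurable f ∈ L²(μ) with μ[f|σ(Y)] = 0 μ-a.e. satisfies f = 0 μ-a.e.). Then for every f ∈ L²(μ): f is μ-a.e. equal to a G-measurable function if and only if f is μ-a.e. equal to a G*-measurable function. -/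
open MeasureTheory ProbabilityTheory

/-! Minimality of the central σ-field gives `G* ≤ G`, so only one direction has content. For
`G`-measurable `g ∈ L²`, conditional independence `Y ⊥⊥ X | G*` means `E[1_B | X] = E[1_B | G*]`
for `B ∈ σ(Y)`; since conditional expectation is self-adjoint, this yields
`E[E[g | G*] | Y] = E[g | Y]`. Hence `g - E[g | G*]` is a `G`-measurable `L²` function with zero
conditional expectation given `Y`, and completeness forces `g = E[g | G*]` a.e. -/

lemma indicator_one_mul_eq_indicator {Ω : Type*} (B : Set Ω) (g : Ω → ℝ) :
    B.indicator (fun _ => (1 : ℝ)) * g = B.indicator g := by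
  ext ω; by_cases hω : ω ∈ B <;> simp [hω]

section

variable {Ω : Type*} {m : MeasurableSpace Ω} [mΩ : MeasurableSpace Ω] {μ : Measure Ω}

lemma abs_condExp_indicator_one_le (B : Set Ω) :
    ∀ᵐ ω ∂μ, |(μ[B.indicator (fun _ => (1 : ℝ))|m]) ω| ≤ 1 := by
  refine ae_bdd_abs_condExp_of_ae_bdd_abs (Filter.Eventually.of_forall fun ω => ?_)
  by_cases hω : ω ∈ B <;> simp [hω]

variable [IsFiniteMeasure μ]

lemma integral_mul_condExp_of_bound (hm : m ≤ mΩ) {f g : Ω → ℝ} (hf : StronglyMeasurable[m] f)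
    {C : ℝ} (hfC : ∀ᵐ ω ∂μ, ‖f ω‖ ≤ C) (hg : Integrable g μ) :
    ∫ ω, (f * μ[g|m]) ω ∂μ = ∫ ω, (f * g) ω ∂μ := by
  rw [← integral_condExp hm (f := f * g)]
  exact integral_congr_ae (condExp_stronglyMeasurable_mul_of_bound hm hf hg C hfC).symm

lemma setIntegral_condExp_eq_integral_condExp_indicator_mul (hm : m ≤ mΩ) {B : Set Ω}
    (hB : MeasurableSet B) {g : Ω → ℝ} (hg : Integrable g μ) :
    ∫ ω in B, (μ[g|m]) ω ∂μ = ∫ ω, (μ[B.indicator (fun _ => (1 : ℝ))|m] * g) ω ∂μ := by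
  have h_ind := indicator_one_mul_eq_indicator B (μ[g|m])
  calc ∫ ω in B, (μ[g|m]) ω ∂μ
      = ∫ ω, (μ[B.indicator (fun _ => (1 : ℝ)) * μ[g|m]|m]) ω ∂μ := by
        rw [integral_condExp hm, h_ind, integral_indicator hB]
    _ = ∫ ω, (μ[B.indicator (fun _ => (1 : ℝ))|m] * μ[g|m]) ω ∂μ := by
        refine integral_congr_ae (condExp_mul_of_stronglyMeasurable_right
          stronglyMeasurable_condExp ?_ ((integrable_const 1).indicator hB))
        rw [h_ind]; exact integrable_condExp.indicator hB
    _ = ∫ ω, (μ[B.indicator (fun _ => (1 : ℝ))|m] * g) ω ∂μ :=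
        integral_mul_condExp_of_bound hm stronglyMeasurable_condExp
          (abs_condExp_indicator_one_le B) hg

end

section CondIndepSigma

variable {Ω : Type*} {mX mY G : MeasurableSpace Ω} [mΩ : MeasurableSpace Ω] {μ : Measure Ω}
  [IsFiniteMeasure μ]

lemma CondIndepSigma.condExp_indicator_eq (hX : mX ≤ mΩ) (hY : mY ≤ mΩ) (hG : G ≤ mX)
    (hCI : CondIndepSigma mΩ μ mX mY G) {B : Set Ω} (hB : MeasurableSet[mY] B) :
    μ[B.indicator (fun _ => (1 : ℝ))|G] =ᵐ[μ] μ[B.indicator (fun _ => (1 : ℝ))|mX] := by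
  have hBΩ := hY B hB
  refine ae_eq_condExp_of_forall_setIntegral_eq hX ((integrable_const 1).indicator hBΩ)
    (fun _ _ _ => integrable_condExp.integrableOn) (fun A hA _ => ?_)
    (stronglyMeasurable_condExp.mono hG).aestronglyMeasurable
  have hAΩ := hX A hA
  calc ∫ ω in A, (μ[B.indicator (fun _ => (1 : ℝ))|G]) ω ∂μ
      = ∫ ω, (μ[A.indicator (fun _ => (1 : ℝ))|G] * B.indicator (fun _ => (1 : ℝ))) ω ∂μ :=
        setIntegral_condExp_eq_integral_condExp_indicator_mul (hG.trans hX) hAΩ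
          ((integrable_const 1).indicator hBΩ)
    _ = ∫ ω, (μ[A.indicator (fun _ => (1 : ℝ))|G] * μ[B.indicator (fun _ => (1 : ℝ))|G]) ω ∂μ :=
        (integral_mul_condExp_of_bound (hG.trans hX) stronglyMeasurable_condExp
          (abs_condExp_indicator_one_le A) ((integrable_const 1).indicator hBΩ)).symm
    _ = ∫ ω, (μ[(A ∩ B).indicator (fun _ => (1 : ℝ))|G]) ω ∂μ :=
        integral_congr_ae (hCI A hA B hB).symm
    _ = ∫ ω in A, B.indicator (fun _ => (1 : ℝ)) ω ∂μ := by
        rw [integral_condExp (hG.trans hX), integral_indicator (hAΩ.inter hBΩ),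
          integral_indicator hBΩ, Measure.restrict_restrict hBΩ, Set.inter_comm]

lemma CondIndepSigma.condExp_condExp_eq (hX : mX ≤ mΩ) (hY : mY ≤ mΩ) (hG : G ≤ mX)
    (hCI : CondIndepSigma mΩ μ mX mY G) {g : Ω → ℝ} (hgX : StronglyMeasurable[mX] g)
    (hg : Integrable g μ) :
    μ[μ[g|G]|mY] =ᵐ[μ] μ[g|mY] := by
  refine ae_eq_condExp_of_forall_setIntegral_eq hY hg
    (fun _ _ _ => integrable_condExp.integrableOn) (fun B hB _ => ?_)
    stronglyMeasurable_condExp.aestronglyMeasurable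
  rw [setIntegral_condExp hY integrable_condExp hB,
    setIntegral_condExp_eq_integral_condExp_indicator_mul (hG.trans hX) (hY B hB) hg,
    integral_congr_ae ((hCI.condExp_indicator_eq hX hY hG hB).mul
      (Filter.EventuallyEq.refl _ g)),
    ← setIntegral_condExp_eq_integral_condExp_indicator_mul hX (hY B hB) hg,
    condExp_of_stronglyMeasurable hX hgX hg]

end CondIndepSigma

theorem complete_sufficient_class_eq_central_class_general
    {Ω EX EY : Type*} [mΩ : MeasurableSpace Ω] [mEX : MeasurableSpace EX]
    [mEY : MeasurableSpace EY]
    (μ : Measure Ω) [IsProbabilityMeasure μ]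
    (X : Ω → EX) (Y : Ω → EY) (hX : Measurable X) (hY : Measurable Y)
    -- G* is the smallest SDR σ-field (the central σ-field):
    (Gstar : MeasurableSpace Ω) (hGstar : Gstar ≤ MeasurableSpace.comap X mEX)
    (hCIstar : CondIndepSigma mΩ μ (MeasurableSpace.comap X mEX)
      (MeasurableSpace.comap Y mEY) Gstar)
    (hmin : ∀ G' : MeasurableSpace Ω, G' ≤ MeasurableSpace.comap X mEX →
      CondIndepSigma mΩ μ (MeasurableSpace.comap X mEX) (MeasurableSpace.comap Y mEY) G' →
      Gstar ≤ G')
    -- G is a sufficient σ-field whose class is complete: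
    (G : MeasurableSpace Ω) (hG : G ≤ MeasurableSpace.comap X mEX)
    (hCI : CondIndepSigma mΩ μ (MeasurableSpace.comap X mEX) (MeasurableSpace.comap Y mEY) G)
    (hcomplete : ∀ f : Ω → ℝ, Measurable[G] f → MemLp f 2 μ →
      (μ[f|MeasurableSpace.comap Y mEY] =ᵐ[μ] 0) → f =ᵐ[μ] 0)
    (f : Ω → ℝ) (hf2 : MemLp f 2 μ) :
    (∃ g : Ω → ℝ, Measurable[G] g ∧ f =ᵐ[μ] g) ↔
      (∃ g : Ω → ℝ, Measurable[Gstar] g ∧ f =ᵐ[μ] g) := by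
  have hGstarG : Gstar ≤ G := hmin G hG hCI
  refine ⟨fun ⟨g, hgG, hfg⟩ => ?_, fun ⟨g, hg, hfg⟩ => ⟨g, hg.mono hGstarG le_rfl, hfg⟩⟩
  have hg2 : MemLp g 2 μ := hf2.ae_eq hfg
  have hg1 : Integrable g μ := hg2.integrable one_le_two
  have h_resid_meas : Measurable[G] (g - μ[g|Gstar]) :=
    hgG.sub (stronglyMeasurable_condExp.measurable.mono hGstarG le_rfl)
  have h_resid_condExp : μ[g - μ[g|Gstar]|MeasurableSpace.comap Y mEY] =ᵐ[μ] 0 := by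
    -- `G` and `Gstar` are local instances here, so the ambient σ-field is passed by name.
    filter_upwards [condExp_sub hg1 (integrable_condExp (m := Gstar) (f := g)) _,
      hCIstar.condExp_condExp_eq (mΩ := mΩ) hX.comap_le hY.comap_le hGstar
        (hgG.stronglyMeasurable.mono hG) hg1] with ω h_sub h_eq
    rw [h_sub, Pi.sub_apply, h_eq, sub_self, Pi.zero_apply]
  have h_resid : g - μ[g|Gstar] =ᵐ[μ] 0 :=
    hcomplete _ h_resid_meas (hg2.sub (hg2.condExp one_le_two)) h_resid_condExp
  refine ⟨μ[g|Gstar], stronglyMeasurable_condExp.measurable, hfg.trans ?_⟩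
  filter_upwards [h_resid] with ω hω
  exact sub_eq_zero.mp hω

/-- Theorem 4: if a complete and sufficient dimension reduction class exists, it coincides
(a.e.) with the central class: a square-integrable `f` is a.e. equal to a `G`-measurable
function iff it is a.e. equal to a `G*`-measurable function, where `G*` is the central
σ-field. -/
theorem complete_sufficient_class_eq_central_class
    {Ω EX EY : Type*} [mΩ : MeasurableSpace Ω] [mEX : MeasurableSpace EX]
    [mEY : MeasurableSpace EY]
    (μ : Measure Ω) [IsProbabilityMeasure μ]
    (X : Ω → EX) (Y : Ω → EY) (hX : Measurable X) (hY : Measurable Y)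
    (κ : Kernel EY EX) [IsMarkovKernel κ]
    (hκ : ∀ A : Set EX, MeasurableSet A → ∀ B : Set EY, MeasurableSet B →
      μ (X ⁻¹' A ∩ Y ⁻¹' B) = ∫⁻ y in B, κ y A ∂(μ.map Y))
    (ν : Measure EX) [SigmaFinite ν] (hdom : ∀ y : EY, κ y ≪ ν)
    -- G* is the smallest SDR σ-field (the central σ-field):
    (Gstar : MeasurableSpace Ω) (hGstar : Gstar ≤ MeasurableSpace.comap X mEX)
    (hCIstar : CondIndepSigma mΩ μ (MeasurableSpace.comap X mEX)
      (MeasurableSpace.comap Y mEY) Gstar)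
    (hmin : ∀ G' : MeasurableSpace Ω, G' ≤ MeasurableSpace.comap X mEX →
      CondIndepSigma mΩ μ (MeasurableSpace.comap X mEX) (MeasurableSpace.comap Y mEY) G' →
      Gstar ≤ G')
    -- G is a sufficient σ-field whose class is complete:
    (G : MeasurableSpace Ω) (hG : G ≤ MeasurableSpace.comap X mEX)
    (hCI : CondIndepSigma mΩ μ (MeasurableSpace.comap X mEX) (MeasurableSpace.comap Y mEY) G)
    (hcomplete : ∀ f : Ω → ℝ, Measurable[G] f → MemLp f 2 μ →
      (μ[f|MeasurableSpace.comap Y mEY] =ᵐ[μ] 0) → f =ᵐ[μ] 0)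
    (f : Ω → ℝ) (hf2 : MemLp f 2 μ) :
    (∃ g : Ω → ℝ, Measurable[G] g ∧ f =ᵐ[μ] g) ↔
      (∃ g : Ω → ℝ, Measurable[Gstar] g ∧ f =ᵐ[μ] g) :=
  complete_sufficient_class_eq_central_class_general (mΩ := mΩ) (mEX := mEX) (mEY := mEY) μ X Y hX
    hY Gstar hGstar hCIstar hmin G hG hCI hcomplete f hf2
end
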